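/- arXiv:2407.08404 — 5 statements merged into one kernel-verified Lean document; each statement's English description precedes it below -/
import Mathlib

section
/- Let X be a nonempty compact subset of ℝ^d, let S_1, …, S_N : X → X (N ≥ 1) be contraction maps, and let C ⊆ X be compact. Then the inhomogeneous attractor satisfies F_C = F_∅ ∪ O, where F_∅ is the homogeneous attractor of the IFS and O is the orbital set. -/
/-!
Points of `F_C` outside the orbital set can be pulled back along words of every length inside
`F_C`, so they lie in `S_w(X)` for arbitrarily long words `w`; the same holds for every point of
`F_∅`. Since `S_w(X)` has diameter at most `K ^ |w| · diam X`, with `K < 1` a common Lipschitz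
constant of the maps, and meets every nonempty invariant subset of `X`, such a point lies in the
closure of any nonempty invariant subset of `X`: of `F_∅` in the first case, of `F_C` in the
second. The orbital set lies in `F_C` because `F_C` contains `C` and is invariant.
-/

open Set Filter Topology Metric

variable {α ι : Type*}

def wordMap (S : ι → α → α) (w : List ι) : α → α :=
  w.foldr (fun i f => S i ∘ f) id

def orbitalSet (S : ι → α → α) (C : Set α) : Set α :=
  ⋃ w : List ι, wordMap S w '' C

section wordMap

variable {S : ι → α → α}

@[simp]
theorem wordMap_nil : wordMap S [] = id := rfl

@[simp]
theorem wordMap_cons (i : ι) (w : List ι) : wordMap S (i :: w) = S i ∘ wordMap S w := rfl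

theorem wordMap_append_singleton (w : List ι) (i : ι) :
    wordMap S (w ++ [i]) = wordMap S w ∘ S i := by
  induction w with
  | nil => rfl
  | cons j w ih => simp only [List.cons_append, wordMap_cons, ih, Function.comp_assoc]

theorem mapsTo_wordMap {B : Set α} (hS : ∀ i, MapsTo (S i) B B) (w : List ι) :
    MapsTo (wordMap S w) B B := by
  induction w with
  | nil => exact mapsTo_id B
  | cons i w ih => exact (hS i).comp ih

theorem lipschitzOnWith_wordMap [PseudoEMetricSpace α] {X : Set α} {K : NNReal}
    (hS : ∀ i, LipschitzOnWith K (S i) X) (hSX : ∀ i, MapsTo (S i) X X) (w : List ι) :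
    LipschitzOnWith (K ^ w.length) (wordMap S w) X := by
  induction w with
  | nil => simpa using LipschitzWith.id.lipschitzOnWith
  | cons i w ih =>
    simpa [pow_succ'] using (hS i).comp ih (mapsTo_wordMap hSX w)

end wordMap

theorem orbitalSet_eq_union (S : ι → α → α) (C : Set α) :
    orbitalSet S C = C ∪ ⋃ w ∈ {w : List ι | w ≠ []}, wordMap S w '' C := by
  ext x
  simp only [orbitalSet, mem_iUnion, mem_union, exists_prop]
  constructor
  · rintro ⟨w, hw⟩
    rcases eq_or_ne w [] with rfl | hne
    · left; simpa using hw
    · exact Or.inr ⟨w, hne, hw⟩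
  · rintro (hx | ⟨w, -, hw⟩)
    · exact ⟨[], by simpa using hx⟩
    · exact ⟨w, hw⟩

theorem orbitalSet_subset {S : ι → α → α} {A C : Set α} (hS : ∀ i, MapsTo (S i) A A)
    (hCA : C ⊆ A) : orbitalSet S C ⊆ A :=
  iUnion_subset fun w => ((mapsTo_wordMap hS w).mono_left hCA).image_subset

@[simp]
theorem orbitalSet_empty (S : ι → α → α) : orbitalSet S ∅ = ∅ := by
  simp [orbitalSet]

theorem exists_mem_image_wordMap_of_notMem_orbitalSet {S : ι → α → α} {A C : Set α}
    (hA : A ⊆ (⋃ i, S i '' A) ∪ C) {x : α} (hx : x ∈ A) (hxO : x ∉ orbitalSet S C) (n : ℕ) :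
    ∃ w : List ι, w.length = n ∧ x ∈ wordMap S w '' A := by
  induction n with
  | zero => exact ⟨[], rfl, x, hx, rfl⟩
  | succ n ih =>
    obtain ⟨w, rfl, y, hyA, rfl⟩ := ih
    rcases hA hyA with hy | hyC
    · obtain ⟨i, z, hzA, rfl⟩ := mem_iUnion.1 hy
      exact ⟨w ++ [i], by simp, z, hzA, by rw [wordMap_append_singleton]; rfl⟩
    · exact absurd (mem_iUnion.2 ⟨w, mem_image_of_mem _ hyC⟩) hxO

theorem mem_closure_of_forall_mem_image_wordMap [PseudoMetricSpace α] {S : ι → α → α}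
    {X A B : Set α} {K : NNReal} (hX : Bornology.IsBounded X) (hK : K < 1)
    (hS : ∀ i, LipschitzOnWith K (S i) X) (hSX : ∀ i, MapsTo (S i) X X)
    (hBX : B ⊆ X) (hB : B.Nonempty) (hSB : ∀ i, MapsTo (S i) B B) (hAX : A ⊆ X) {x : α}
    (hx : ∀ n, ∃ w : List ι, w.length = n ∧ x ∈ wordMap S w '' A) : x ∈ closure B := by
  obtain ⟨z, hz⟩ := hB
  rw [mem_closure_iff_infDist_zero ⟨z, hz⟩]
  have hbound : ∀ n, infDist x B ≤ K ^ n * diam X := by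
    intro n
    obtain ⟨w, rfl, y, hyA, rfl⟩ := hx n
    calc infDist (wordMap S w y) B ≤ dist (wordMap S w y) (wordMap S w z) :=
          infDist_le_dist_of_mem (mapsTo_wordMap hSB w hz)
      _ ≤ K ^ w.length * dist y z :=
          (lipschitzOnWith_wordMap hS hSX w).dist_le_mul _ (hAX hyA) _ (hBX hz)
      _ ≤ K ^ w.length * diam X := by
          gcongr; exact dist_le_diam_of_mem hX (hAX hyA) (hBX hz)
  have hlim : Tendsto (fun n : ℕ => (K : ℝ) ^ n * diam X) atTop (𝓝 0) := by
    simpa using (tendsto_pow_atTop_nhds_zero_of_lt_one K.coe_nonneg hK).mul_const (diam X)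
  exact le_antisymm (ge_of_tendsto' hlim hbound) infDist_nonneg

theorem exists_lipschitzOnWith_lt_one [PseudoEMetricSpace α] [Finite ι] {S : ι → α → α}
    {X : Set α} (h : ∀ i, ∃ K : NNReal, K < 1 ∧ LipschitzOnWith K (S i) X) :
    ∃ K : NNReal, K < 1 ∧ ∀ i, LipschitzOnWith K (S i) X := by
  choose K hK hSK using h
  cases nonempty_fintype ι
  exact ⟨Finset.univ.sup K, (Finset.sup_lt_iff zero_lt_one).2 fun i _ => hK i,
    fun i => (hSK i).weaken (Finset.le_sup (Finset.mem_univ i))⟩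

theorem inhomogeneous_attractor_eq_homogeneous_union_orbital_general
    {d : ℕ} (X : Set (EuclideanSpace ℝ (Fin d))) (hXcomp : IsCompact X)
    (N : ℕ)
    (S : Fin N → EuclideanSpace ℝ (Fin d) → EuclideanSpace ℝ (Fin d))
    (hS : ∀ i, Set.MapsTo (S i) X X)
    (hcontr : ∀ i, ∃ c : ℝ, 0 < c ∧ c < 1 ∧
      ∀ x ∈ X, ∀ y ∈ X, dist (S i x) (S i y) ≤ c * dist x y)
    (C : Set (EuclideanSpace ℝ (Fin d)))
    (FC : Set (EuclideanSpace ℝ (Fin d)))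
    (hFC : FC.Nonempty ∧ IsCompact FC ∧ FC ⊆ X ∧ FC = (⋃ i, S i '' FC) ∪ C)
    (Fe : Set (EuclideanSpace ℝ (Fin d)))
    (hFe : Fe.Nonempty ∧ IsCompact Fe ∧ Fe ⊆ X ∧ Fe = ⋃ i, S i '' Fe) :
    FC = Fe ∪ (C ∪ ⋃ w ∈ {w : List (Fin N) | w ≠ []},
      (w.foldr (fun i f => S i ∘ f) id) '' C) := by
  obtain ⟨hFCne, hFCcomp, hFCX, hFCeq⟩ := hFC
  obtain ⟨hFene, hFecomp, hFeX, hFeeq⟩ := hFe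
  obtain ⟨K, hK, hSK⟩ := exists_lipschitzOnWith_lt_one fun i =>
    let ⟨c, _, hc1, hc⟩ := hcontr i
    ⟨c.toNNReal, Real.toNNReal_lt_one.2 hc1, LipschitzOnWith.of_dist_le' hc⟩
  have mem_of_closed_invariant : ∀ B A, B ⊆ X → B.Nonempty → IsClosed B →
      (∀ i, MapsTo (S i) B B) → A ⊆ X → ∀ x,
      (∀ n, ∃ w : List (Fin N), w.length = n ∧ x ∈ wordMap S w '' A) → x ∈ B :=
    fun B A hBX hB hBc hSB hAX x hx => hBc.closure_eq ▸
      mem_closure_of_forall_mem_image_wordMap hXcomp.isBounded hK hSK hS hBX hB hSB hAX hx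
  have hSFC : ∀ i, MapsTo (S i) FC FC := fun i x hx =>
    hFCeq ▸ Or.inl (mem_iUnion.2 ⟨i, mem_image_of_mem _ hx⟩)
  have hSFe : ∀ i, MapsTo (S i) Fe Fe := fun i x hx =>
    hFeeq ▸ mem_iUnion.2 ⟨i, mem_image_of_mem _ hx⟩
  change FC = Fe ∪ (C ∪ ⋃ w ∈ {w : List (Fin N) | w ≠ []}, wordMap S w '' C)
  rw [← orbitalSet_eq_union]
  refine Subset.antisymm (fun x hx => ?_) (union_subset (fun x hx => ?_) ?_)
  · by_cases hxO : x ∈ orbitalSet S C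
    · exact Or.inr hxO
    · exact Or.inl (mem_of_closed_invariant Fe FC hFeX hFene hFecomp.isClosed hSFe hFCX x
        (exists_mem_image_wordMap_of_notMem_orbitalSet hFCeq.le hx hxO))
  · refine mem_of_closed_invariant FC Fe hFCX hFCne hFCcomp.isClosed hSFC hFeX x
      (exists_mem_image_wordMap_of_notMem_orbitalSet (C := ∅) ?_ hx (by simp))
    rw [union_empty]; exact hFeeq.le
  · exact orbitalSet_subset hSFC (hFCeq ▸ subset_union_right)

/-- The inhomogeneous attractor decomposes as `F_C = F_∅ ∪ O`, where `F_∅` is the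
homogeneous attractor and `O` is the orbital set
`O = C ∪ ⋃_{k ≥ 1} ⋃_{i₁,…,i_k} S_{i₁} ∘ ⋯ ∘ S_{i_k} (C)`
(finite nonempty words are encoded as nonempty lists over `Fin N`, and a word
`w = [i₁, …, i_k]` acts by `S_{i₁} ∘ ⋯ ∘ S_{i_k}`). -/
theorem inhomogeneous_attractor_eq_homogeneous_union_orbital
    {d : ℕ} (X : Set (EuclideanSpace ℝ (Fin d))) (hXcomp : IsCompact X) (hXne : X.Nonempty)
    (N : ℕ) (hN : 1 ≤ N)
    (S : Fin N → EuclideanSpace ℝ (Fin d) → EuclideanSpace ℝ (Fin d))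
    (hS : ∀ i, Set.MapsTo (S i) X X)
    (hcontr : ∀ i, ∃ c : ℝ, 0 < c ∧ c < 1 ∧
      ∀ x ∈ X, ∀ y ∈ X, dist (S i x) (S i y) ≤ c * dist x y)
    (C : Set (EuclideanSpace ℝ (Fin d))) (hC : IsCompact C) (hCX : C ⊆ X)
    (FC : Set (EuclideanSpace ℝ (Fin d)))
    (hFC : FC.Nonempty ∧ IsCompact FC ∧ FC ⊆ X ∧ FC = (⋃ i, S i '' FC) ∪ C)
    (Fe : Set (EuclideanSpace ℝ (Fin d)))
    (hFe : Fe.Nonempty ∧ IsCompact Fe ∧ Fe ⊆ X ∧ Fe = ⋃ i, S i '' Fe) :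
    FC = Fe ∪ (C ∪ ⋃ w ∈ {w : List (Fin N) | w ≠ []},
      (w.foldr (fun i f => S i ∘ f) id) '' C) :=
  inhomogeneous_attractor_eq_homogeneous_union_orbital_general X hXcomp N S hS hcontr C FC hFC Fe
    hFe
end

section
/- Let X be a nonempty compact subset of ℝ^d, let S_1, …, S_N : X → X (N ≥ 1) be contraction maps, and let C ⊆ X be compact. Then the Hausdorff dimension of the inhomogeneous attractor satisfies dim_H F_C = max{dim_H F_∅, dim_H C}, where F_∅ is the homogeneous attractor of the IFS. -/
/-!
Write `S_w = S_{w₁} ∘ ⋯ ∘ S_{wₙ}` for a word `w`. Unwinding `F_C = ⋃ S_i(F_C) ∪ C` shows that a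
point of `F_C` either lies in the orbital set `⋃_w S_w(C)` or lies in `S_w(F_C)` for words `w` of
every length. Since `S_w` contracts by `c^|w|`, such a point is within `c^n diam X` of
`S_w(F_∅) ⊆ F_∅` for all `n`, hence in the closed set `F_∅`; symmetrically `F_∅ ⊆ F_C`. Thus
`F_C = F_∅ ∪ ⋃_w S_w(C)`, and by countable stability of `dim_H` and its monotonicity under
Lipschitz maps the orbital set has the dimension of `C`.
-/

open Set Metric Filter Topology
open scoped NNReal

namespace IFS

variable {α ι : Type*} (S : ι → α → α)

/-- `wordMap S [i₁, …, iₙ] = S i₁ ∘ ⋯ ∘ S iₙ`. -/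
def wordMap : List ι → α → α
  | [] => id
  | i :: w => S i ∘ wordMap w

def orbitalSet (C : Set α) : Set α :=
  ⋃ w, wordMap S w '' C

variable {S}

theorem wordMap_append (u v : List ι) : wordMap S (u ++ v) = wordMap S u ∘ wordMap S v := by
  induction u with
  | nil => rfl
  | cons i u ih => simp only [List.cons_append, wordMap, ih, Function.comp_assoc]

theorem mapsTo_wordMap {X : Set α} (hmaps : ∀ i, MapsTo (S i) X X) (w : List ι) :
    MapsTo (wordMap S w) X X := by
  induction w with
  | nil => exact mapsTo_id X
  | cons i w ih => exact (hmaps i).comp ih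

theorem lipschitzOnWith_wordMap [PseudoEMetricSpace α] {X : Set α} {K : ℝ≥0}
    (hmaps : ∀ i, MapsTo (S i) X X) (hlip : ∀ i, LipschitzOnWith K (S i) X) (w : List ι) :
    LipschitzOnWith (K ^ w.length) (wordMap S w) X := by
  induction w with
  | nil => simpa [wordMap] using LipschitzWith.id.lipschitzOnWith
  | cons i w ih => simpa [wordMap, pow_succ'] using (hlip i).comp ih (mapsTo_wordMap hmaps w)

theorem subset_orbitalSet (C : Set α) : C ⊆ orbitalSet S C :=
  fun x hx => mem_iUnion.2 ⟨[], x, hx, rfl⟩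

@[simp]
theorem orbitalSet_empty : orbitalSet S ∅ = ∅ := by
  simp [orbitalSet]

theorem dimH_orbitalSet [EMetricSpace α] [Countable ι] {X C : Set α} {K : ℝ≥0}
    (hmaps : ∀ i, MapsTo (S i) X X) (hlip : ∀ i, LipschitzOnWith K (S i) X) (hCX : C ⊆ X) :
    dimH (orbitalSet S C) = dimH C := by
  refine le_antisymm ?_ (dimH_mono (subset_orbitalSet C))
  rw [orbitalSet, dimH_iUnion]
  exact iSup_le fun w => ((lipschitzOnWith_wordMap hmaps hlip w).mono hCX).dimH_image_le

theorem mapsTo_of_iUnion_image_union_subset {F E : Set α} (h : (⋃ i, S i '' F) ∪ E ⊆ F)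
    (i : ι) : MapsTo (S i) F F :=
  mapsTo_iff_image_subset.2 <|
    (subset_iUnion (fun i => S i '' F) i).trans (subset_union_left.trans h)

theorem exists_length_eq_mem_wordMap_image {F E : Set α} (hF : F ⊆ (⋃ i, S i '' F) ∪ E)
    {x : α} (hx : x ∈ F) (hxE : x ∉ orbitalSet S E) (n : ℕ) :
    ∃ w : List ι, w.length = n ∧ x ∈ wordMap S w '' F := by
  induction n with
  | zero => exact ⟨[], rfl, x, hx, rfl⟩
  | succ n ih =>
    obtain ⟨w, hw, y, hy, rfl⟩ := ih
    rcases hF hy with hy | hy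
    · obtain ⟨i, z, hz, rfl⟩ := mem_iUnion.1 hy
      exact ⟨w ++ [i], by simp [hw], z, hz, by simp [wordMap_append, wordMap]⟩
    · exact (hxE (mem_iUnion.2 ⟨w, y, hy, rfl⟩)).elim

theorem exists_lipschitzOnWith_lt_one [PseudoEMetricSpace α] [Finite ι] {X : Set α}
    (h : ∀ i, ∃ K : ℝ≥0, K < 1 ∧ LipschitzOnWith K (S i) X) :
    ∃ K : ℝ≥0, K < 1 ∧ ∀ i, LipschitzOnWith K (S i) X := by
  choose K hK hlip using h
  have := Fintype.ofFinite ι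
  refine ⟨Finset.univ.sup K, (Finset.sup_lt_iff zero_lt_one).2 fun i _ => hK i, fun i => ?_⟩
  exact (hlip i).weaken (Finset.le_sup (Finset.mem_univ i))

section Metric

variable [MetricSpace α] {X : Set α} {K : ℝ≥0}

/-- `S_w(A)` and `S_w(B) ⊆ B` are `K ^ |w| * diam X` close. -/
theorem mem_of_forall_exists_length_eq_mem_wordMap_image (hK : K < 1)
    (hX : Bornology.IsBounded X) (hmaps : ∀ i, MapsTo (S i) X X)
    (hlip : ∀ i, LipschitzOnWith K (S i) X) {A B : Set α} (hAX : A ⊆ X) (hBX : B ⊆ X)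
    (hBc : IsClosed B) (hBne : B.Nonempty) (hBinv : ∀ i, MapsTo (S i) B B) {x : α}
    (hx : ∀ n, ∃ w : List ι, w.length = n ∧ x ∈ wordMap S w '' A) : x ∈ B := by
  obtain ⟨z, hz⟩ := hBne
  have hdist (n : ℕ) : infDist x B ≤ K ^ n * diam X := by
    obtain ⟨w, rfl, y, hy, rfl⟩ := hx n
    calc infDist (wordMap S w y) B ≤ dist (wordMap S w y) (wordMap S w z) :=
          infDist_le_dist_of_mem (mapsTo_wordMap hBinv w hz)
      _ ≤ K ^ w.length * dist y z := by
          exact_mod_cast (lipschitzOnWith_wordMap hmaps hlip w).dist_le_mul y (hAX hy) z (hBX hz)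
      _ ≤ K ^ w.length * diam X := by
          gcongr
          exact dist_le_diam_of_mem hX (hAX hy) (hBX hz)
  have hlim : Tendsto (fun n : ℕ => (K : ℝ) ^ n * diam X) atTop (𝓝 0) := by
    simpa using (tendsto_pow_atTop_nhds_zero_of_lt_one K.coe_nonneg hK).mul_const (diam X)
  rw [← hBc.closure_eq, mem_closure_iff_infDist_zero ⟨z, hz⟩]
  exact le_antisymm (ge_of_tendsto' hlim hdist) infDist_nonneg

theorem inhomogeneous_attractor_eq_union_orbitalSet (hK : K < 1) (hX : Bornology.IsBounded X)
    (hmaps : ∀ i, MapsTo (S i) X X) (hlip : ∀ i, LipschitzOnWith K (S i) X) {C F E : Set α}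
    (hFc : IsClosed F) (hFne : F.Nonempty) (hFX : F ⊆ X) (hF : F = (⋃ i, S i '' F) ∪ C)
    (hEc : IsClosed E) (hEne : E.Nonempty) (hEX : E ⊆ X) (hE : E = ⋃ i, S i '' E) :
    F = E ∪ orbitalSet S C := by
  have hFinv := mapsTo_of_iUnion_image_union_subset hF.ge
  have hEinv := mapsTo_of_iUnion_image_union_subset (E := ∅) (by rw [union_empty, ← hE])
  refine subset_antisymm (fun x hx => ?_) (union_subset (fun x hx => ?_) ?_)
  · by_cases hxC : x ∈ orbitalSet S C
    · exact Or.inr hxC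
    · exact Or.inl <| mem_of_forall_exists_length_eq_mem_wordMap_image hK hX hmaps hlip hFX hEX
        hEc hEne hEinv (exists_length_eq_mem_wordMap_image hF.le hx hxC)
  · exact mem_of_forall_exists_length_eq_mem_wordMap_image hK hX hmaps hlip hEX hFX hFc hFne hFinv
      (exists_length_eq_mem_wordMap_image (E := ∅) (by rw [union_empty, ← hE]) hx (by simp))
  · exact iUnion_subset fun w => (mapsTo_wordMap hFinv w).image_subset.trans'
      (image_mono (hF ▸ subset_union_right))

end Metric

end IFS

theorem dimH_inhomogeneous_attractor_general
    {d : ℕ} (X : Set (EuclideanSpace ℝ (Fin d))) (hXcomp : IsCompact X)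
    (N : ℕ)
    (S : Fin N → EuclideanSpace ℝ (Fin d) → EuclideanSpace ℝ (Fin d))
    (hS : ∀ i, Set.MapsTo (S i) X X)
    (hcontr : ∀ i, ∃ c : ℝ, 0 < c ∧ c < 1 ∧
      ∀ x ∈ X, ∀ y ∈ X, dist (S i x) (S i y) ≤ c * dist x y)
    (C : Set (EuclideanSpace ℝ (Fin d))) (hCX : C ⊆ X)
    (FC : Set (EuclideanSpace ℝ (Fin d)))
    (hFC : FC.Nonempty ∧ IsCompact FC ∧ FC ⊆ X ∧ FC = (⋃ i, S i '' FC) ∪ C)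
    (Fe : Set (EuclideanSpace ℝ (Fin d)))
    (hFe : Fe.Nonempty ∧ IsCompact Fe ∧ Fe ⊆ X ∧ Fe = ⋃ i, S i '' Fe) :
    dimH FC = max (dimH Fe) (dimH C) := by
  obtain ⟨hFCne, hFCcomp, hFCX, hFCeq⟩ := hFC
  obtain ⟨hFene, hFecomp, hFeX, hFeeq⟩ := hFe
  obtain ⟨K, hK, hlip⟩ := IFS.exists_lipschitzOnWith_lt_one fun i => by
    obtain ⟨c, hc0, hc1, hc⟩ := hcontr i
    exact ⟨⟨c, hc0.le⟩, hc1, LipschitzOnWith.of_dist_le_mul hc⟩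
  rw [IFS.inhomogeneous_attractor_eq_union_orbitalSet hK hXcomp.isBounded hS hlip
    hFCcomp.isClosed hFCne hFCX hFCeq hFecomp.isClosed hFene hFeX hFeeq, dimH_union,
    IFS.dimH_orbitalSet hS hlip hCX]

/-- The Hausdorff dimension of the inhomogeneous attractor satisfies
`dim_H F_C = max {dim_H F_∅, dim_H C}`, where `F_∅` is the homogeneous attractor of the IFS. -/
theorem dimH_inhomogeneous_attractor
    {d : ℕ} (X : Set (EuclideanSpace ℝ (Fin d))) (hXcomp : IsCompact X) (hXne : X.Nonempty)
    (N : ℕ) (hN : 1 ≤ N)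
    (S : Fin N → EuclideanSpace ℝ (Fin d) → EuclideanSpace ℝ (Fin d))
    (hS : ∀ i, Set.MapsTo (S i) X X)
    (hcontr : ∀ i, ∃ c : ℝ, 0 < c ∧ c < 1 ∧
      ∀ x ∈ X, ∀ y ∈ X, dist (S i x) (S i y) ≤ c * dist x y)
    (C : Set (EuclideanSpace ℝ (Fin d))) (hC : IsCompact C) (hCX : C ⊆ X)
    (FC : Set (EuclideanSpace ℝ (Fin d)))
    (hFC : FC.Nonempty ∧ IsCompact FC ∧ FC ⊆ X ∧ FC = (⋃ i, S i '' FC) ∪ C)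
    (Fe : Set (EuclideanSpace ℝ (Fin d)))
    (hFe : Fe.Nonempty ∧ IsCompact Fe ∧ Fe ⊆ X ∧ Fe = ⋃ i, S i '' Fe) :
    dimH FC = max (dimH Fe) (dimH C) :=
  dimH_inhomogeneous_attractor_general X hXcomp N S hS hcontr C hCX FC hFC Fe hFe
end

section
/- Let λ ∈ (1/2, 1) be the reciprocal of a Garsia number. Then there exists a constant K > 0, depending only on λ, such that for every n ∈ ℕ and every pair of distinct words (i_1,…,i_n), (i'_1,…,i'_n) ∈ {1,2}^n, one has | (1−λ) Σ_{k=1}^n i_k λ^{k−1} − (1−λ) Σ_{k=1}^n i'_k λ^{k−1} | > K / 2^n. -/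
/-- A Garsia number: a positive real algebraic integer whose minimal polynomial over `ℚ` has
constant term of absolute value `2` (i.e. it has norm `±2`), and all of whose complex
conjugates (roots of its minimal polynomial) have modulus strictly greater than `1`. -/
def IsGarsiaNumber (a : ℝ) : Prop :=
  0 < a ∧ IsIntegral ℤ a ∧ |(minpoly ℚ a).coeff 0| = 2 ∧
    ∀ z : ℂ, Polynomial.aeval z (minpoly ℚ a) = 0 → 1 < ‖z‖

/-!
Write `β = λ⁻¹`. The difference of two expansions is `(1 - λ) P(λ)` for a nonzero `P ∈ ℤ[X]`
with coefficients in `{-1, 0, 1}` and degree `M < n`. For the reversed polynomial `R` one has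
`P(λ) = λ^M R(β)`, and `R(β) ≠ 0` because `R(0) = ±1` while the minimal polynomial of `β` has
constant term `±2`. The norm of the algebraic integer `R(β)` is then a nonzero integer, so the
product of `|σ R(β)|` over the complex embeddings `σ` of `ℚ(β)` is at least `1`. For `σ` other
than the real embedding, `|σ β| > 1` gives `|σ R(β)| ≤ C_σ |σ β|^M`, and the product of these
`|σ β|` is `2 / β`. Hence `|R(β)| ≥ c (β / 2)^M`, that is `|P(λ)| ≥ c / 2^M`.
-/

open Polynomial IntermediateField Finset

theorem norm_aeval_le_of_abs_coeff_le_one {z : ℂ} (hz : 1 < ‖z‖) {R : ℤ[X]} {M : ℕ}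
    (hdeg : R.natDegree ≤ M) (hcoeff : ∀ k, |R.coeff k| ≤ 1) :
    ‖aeval z R‖ ≤ ‖z‖ / (‖z‖ - 1) * ‖z‖ ^ M := by
  have hz1 : 0 < ‖z‖ - 1 := by linarith
  calc ‖aeval z R‖ = ‖∑ k ∈ range (M + 1), R.coeff k • z ^ k‖ := by
        rw [aeval_eq_sum_range' (Nat.lt_succ_of_le hdeg)]
    _ ≤ ∑ k ∈ range (M + 1), ‖z‖ ^ k := by
        refine (norm_sum_le _ _).trans (sum_le_sum fun k _ => ?_)
        rw [zsmul_eq_mul, norm_mul, norm_pow, Complex.norm_intCast]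
        exact mul_le_of_le_one_left (by positivity) (by exact_mod_cast hcoeff k)
    _ = (‖z‖ ^ (M + 1) - 1) / (‖z‖ - 1) := geom_sum_eq hz.ne' _
    _ ≤ ‖z‖ ^ (M + 1) / (‖z‖ - 1) := by gcongr; linarith
    _ = ‖z‖ / (‖z‖ - 1) * ‖z‖ ^ M := by rw [pow_succ]; ring

theorem aeval_ne_zero_of_isUnit_coeff_zero {R S : Type*} [CommRing R] [IsDomain R]
    [IsIntegrallyClosed R] [CommRing S] [IsDomain S] [Algebra R S] [Module.IsTorsionFree R S]
    {s : S} (hs : IsIntegral R s) (hmin : ¬IsUnit ((minpoly R s).coeff 0)) {p : R[X]}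
    (hp : IsUnit (p.coeff 0)) : aeval s p ≠ 0 := by
  intro h0
  obtain ⟨q, rfl⟩ := minpoly.isIntegrallyClosed_dvd hs h0
  rw [mul_coeff_zero] at hp
  exact hmin (isUnit_of_mul_isUnit_left hp)

theorem isUnit_coeff_zero_minpoly_int_iff {S : Type*} [Field S] [CharZero S] {x : S}
    (hx : IsIntegral ℤ x) : IsUnit ((minpoly ℤ x).coeff 0) ↔ |(minpoly ℚ x).coeff 0| = 1 := by
  rw [minpoly.isIntegrallyClosed_eq_field_fractions' ℚ hx, coeff_map, eq_intCast,
    Int.isUnit_iff_abs_eq]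
  exact_mod_cast Iff.rfl

theorem IntermediateField.AdjoinSimple.norm_gen {F E : Type*} [Field F] [Field E] [Algebra F E]
    {x : E} (hx : IsIntegral F x) :
    Algebra.norm F (AdjoinSimple.gen F x) =
      (-1) ^ (minpoly F x).natDegree * (minpoly F x).coeff 0 := by
  rw [← adjoin.powerBasis_gen hx, Algebra.PowerBasis.norm_gen_eq_coeff_zero_minpoly,
    adjoin.powerBasis_gen hx, minpoly_gen, adjoin.powerBasis_dim]

section Embeddings

variable {K : Type*} [Field K] [Algebra ℚ K] [FiniteDimensional ℚ K]

theorem prod_norm_embeddings_eq_abs_norm (x : K) :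
    ∏ σ : K →ₐ[ℚ] ℂ, ‖σ x‖ = |(Algebra.norm ℚ x : ℝ)| := by
  rw [← norm_prod, ← Algebra.norm_eq_prod_embeddings, eq_ratCast, ← Complex.ofReal_ratCast,
    Complex.norm_real, Real.norm_eq_abs]

theorem one_le_prod_norm_embeddings {x : K} (hx : IsIntegral ℤ x) (h0 : x ≠ 0) :
    1 ≤ ∏ σ : K →ₐ[ℚ] ℂ, ‖σ x‖ := by
  obtain ⟨m, hm⟩ := IsIntegrallyClosed.isIntegral_iff.mp (Algebra.isIntegral_norm ℚ hx)
  have hm0 : m ≠ 0 := by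
    rintro rfl
    exact Algebra.norm_ne_zero_iff.mpr h0 (by rw [← hm, map_zero])
  rw [prod_norm_embeddings_eq_abs_norm, ← hm, eq_intCast, Rat.cast_intCast]
  exact_mod_cast Int.one_le_abs hm0

theorem one_le_norm_aeval_mul_prod_erase [DecidableEq (K →ₐ[ℚ] ℂ)] {g : K}
    (hg : IsIntegral ℤ g) (σ₀ : K →ₐ[ℚ] ℂ) (hσ : ∀ σ ≠ σ₀, 1 < ‖σ g‖) {R : ℤ[X]} {M : ℕ}
    (hdeg : R.natDegree ≤ M) (hcoeff : ∀ k, |R.coeff k| ≤ 1) (hR : aeval g R ≠ 0) :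
    1 ≤ ‖σ₀ (aeval g R)‖ * ∏ σ ∈ univ.erase σ₀, ‖σ g‖ / (‖σ g‖ - 1) * ‖σ g‖ ^ M :=
  calc 1 ≤ ∏ σ : K →ₐ[ℚ] ℂ, ‖σ (aeval g R)‖ :=
        one_le_prod_norm_embeddings
          (adjoin_le_integralClosure hg (aeval_mem_adjoin_singleton ℤ g)) hR
    _ = ‖σ₀ (aeval g R)‖ * ∏ σ ∈ univ.erase σ₀, ‖σ (aeval g R)‖ :=
        (mul_prod_erase _ _ (mem_univ _)).symm
    _ ≤ _ := by
        gcongr with σ hσσ₀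
        have hσR : σ (aeval g R) = aeval (σ g) R :=
          (aeval_algHom_apply (σ.restrictScalars ℤ) g R).symm
        rw [hσR]
        exact norm_aeval_le_of_abs_coeff_le_one (hσ σ (ne_of_mem_erase hσσ₀)) hdeg hcoeff

end Embeddings

noncomputable def IntermediateField.realEmbedding (E : IntermediateField ℚ ℝ) : E →ₐ[ℚ] ℂ :=
  (Complex.ofRealAm.restrictScalars ℚ).comp E.val

theorem IntermediateField.realEmbedding_apply (E : IntermediateField ℚ ℝ) (x : E) :
    E.realEmbedding x = ((x : ℝ) : ℂ) := rfl

theorem exists_one_le_mul_abs_aeval {β : ℝ} (hβ : IsIntegral ℤ β)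
    (hconj : ∀ z : ℂ, aeval z (minpoly ℚ β) = 0 → 1 < ‖z‖) :
    ∃ c > 0, ∀ (M : ℕ) (R : ℤ[X]), R.natDegree ≤ M → (∀ k, |R.coeff k| ≤ 1) →
      aeval β R ≠ 0 → 1 ≤ c * (|((minpoly ℚ β).coeff 0 : ℝ)| / |β|) ^ M * |aeval β R| := by
  classical
  have hβℚ : IsIntegral ℚ β := hβ.tower_top
  have := adjoin.finiteDimensional hβℚ
  set g := AdjoinSimple.gen ℚ β
  set σ₀ := ℚ⟮β⟯.realEmbedding
  have hg : IsIntegral ℤ g := by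
    rw [← isIntegral_algebraMap_iff (algebraMap ℚ⟮β⟯ ℝ).injective, AdjoinSimple.algebraMap_gen]
    exact hβ
  have hσ (σ : ℚ⟮β⟯ →ₐ[ℚ] ℂ) : 1 < ‖σ g‖ :=
    have hg0 : aeval g (minpoly ℚ β) = 0 := aeval_gen_minpoly ℚ β
    hconj _ (by rw [aeval_algHom_apply, hg0, map_zero])
  have hσ₀ : ‖σ₀ g‖ = |β| := by
    rw [realEmbedding_apply, AdjoinSimple.coe_gen, Complex.norm_real, Real.norm_eq_abs]
  have hβ0 : |β| ≠ 0 := hσ₀ ▸ (zero_lt_one.trans (hσ σ₀)).ne'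
  have hrest : ∏ σ ∈ univ.erase σ₀, ‖σ g‖ = |((minpoly ℚ β).coeff 0 : ℝ)| / |β| := by
    have hN : Algebra.norm ℚ g = (-1) ^ (minpoly ℚ β).natDegree * (minpoly ℚ β).coeff 0 :=
      AdjoinSimple.norm_gen hβℚ
    have hprod := prod_norm_embeddings_eq_abs_norm g
    rw [hN, ← mul_prod_erase univ _ (mem_univ σ₀), hσ₀] at hprod
    rw [eq_div_iff hβ0, mul_comm, hprod]
    push_cast
    rw [abs_mul, abs_pow, abs_neg, abs_one, one_pow, one_mul]
  refine ⟨∏ σ ∈ univ.erase σ₀, ‖σ g‖ / (‖σ g‖ - 1),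
    prod_pos fun σ _ => div_pos (by linarith [hσ σ]) (by linarith [hσ σ]),
    fun M R hdeg hcoeff hR => ?_⟩
  have hσ₀R : σ₀ (aeval g R) = (aeval β R : ℂ) := by
    rw [realEmbedding_apply]
    conv_rhs => rw [← AdjoinSimple.algebraMap_gen ℚ β, aeval_algebraMap_apply]
    rfl
  have hgR : aeval g R ≠ 0 := fun h => hR (by exact_mod_cast hσ₀R.symm.trans (h ▸ map_zero σ₀))
  have key := one_le_norm_aeval_mul_prod_erase hg σ₀ (fun σ _ => hσ σ) hdeg hcoeff hgR
  rwa [prod_mul_distrib, prod_pow, hrest, hσ₀R, Complex.norm_real, Real.norm_eq_abs,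
    mul_comm] at key

theorem IsGarsiaNumber.exists_one_le_mul_abs_aeval_inv {l : ℝ} (hgarsia : IsGarsiaNumber l⁻¹) :
    ∃ c > 0, ∀ P : ℤ[X], P ≠ 0 → (∀ k, |P.coeff k| ≤ 1) →
      1 ≤ c * 2 ^ P.natDegree * |aeval l P| := by
  obtain ⟨hpos, hint, hnorm, hconj⟩ := hgarsia
  obtain ⟨c, hc, hbound⟩ := exists_one_le_mul_abs_aeval hint hconj
  refine ⟨c, hc, fun P hP hcoeff => ?_⟩
  have hl : 0 < l := inv_pos.mp hpos
  let _ := invertibleOfNonzero hl.ne'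
  have hreverse : aeval l⁻¹ P.reverse * l ^ P.natDegree = aeval l P := by
    simpa only [aeval_def, invOf_eq_inv] using eval₂_reverse_mul_pow (algebraMap ℤ ℝ) l P
  have hunit : IsUnit (P.reverse.coeff 0) := by
    rw [coeff_zero_reverse, Int.isUnit_iff_abs_eq]
    exact le_antisymm (hcoeff _) (Int.one_le_abs (leadingCoeff_ne_zero.mpr hP))
  have hmin : ¬IsUnit ((minpoly ℤ l⁻¹).coeff 0) := by
    rw [isUnit_coeff_zero_minpoly_int_iff hint, hnorm]
    norm_num
  have key := hbound P.natDegree P.reverse (reverse_natDegree_le P)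
    (fun k => by rw [coeff_reverse]; exact hcoeff _)
    (aeval_ne_zero_of_isUnit_coeff_zero hint hmin hunit)
  have hnorm' : |((minpoly ℚ l⁻¹).coeff 0 : ℝ)| = 2 := by exact_mod_cast hnorm
  rw [hnorm', abs_of_pos hpos, div_inv_eq_mul] at key
  calc 1 ≤ c * (2 * l) ^ P.natDegree * |aeval l⁻¹ P.reverse| := key
    _ = c * 2 ^ P.natDegree * |aeval l P| := by
        rw [← hreverse, abs_mul, abs_pow, abs_of_pos hl, mul_pow]
        ring

theorem coeff_sum_fin_C_mul_X_pow {R : Type*} [Semiring R] {n : ℕ} (f : Fin n → R) (j : Fin n) :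
    (∑ k : Fin n, C (f k) * X ^ (k : ℕ)).coeff j = f j := by
  simp [Fin.val_inj]

theorem exists_polynomial_eq_sub_of_ne {n : ℕ} {i i' : Fin n → Fin 2} (hne : i ≠ i') :
    ∃ P : ℤ[X], P ≠ 0 ∧ (∀ k, |P.coeff k| ≤ 1) ∧ P.natDegree < n ∧
      ∀ x : ℝ, (∑ k : Fin n, (((i k : ℕ) + 1 : ℕ) : ℝ) * x ^ (k : ℕ)) -
        (∑ k : Fin n, (((i' k : ℕ) + 1 : ℕ) : ℝ) * x ^ (k : ℕ)) = aeval x P := by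
  set d : Fin n → ℤ := fun k => (i k : ℤ) - (i' k : ℤ)
  set P : ℤ[X] := ∑ k : Fin n, C (d k) * X ^ (k : ℕ)
  have hdegree : P.degree < n := degree_sum_fin_lt d
  have hcoeff_lt (k : Fin n) : P.coeff k = d k := coeff_sum_fin_C_mul_X_pow d k
  obtain ⟨k₀, hk₀⟩ := Function.ne_iff.mp hne
  have hP : P ≠ 0 := by
    intro h
    have := hcoeff_lt k₀
    rw [h, coeff_zero, eq_comm, sub_eq_zero] at this
    exact hk₀ (Fin.ext (by exact_mod_cast this))
  refine ⟨P, hP, fun k => ?_, (natDegree_lt_iff_degree_lt hP).mpr hdegree, fun x => ?_⟩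
  · by_cases hk : k < n
    · rw [show k = (⟨k, hk⟩ : Fin n) from rfl, hcoeff_lt, abs_le]
      have := (i ⟨k, hk⟩).isLt
      have := (i' ⟨k, hk⟩).isLt
      simp only [d]
      omega
    · rw [coeff_eq_zero_of_degree_lt (hdegree.trans_le (by exact_mod_cast not_lt.mp hk))]
      simp
  · simp only [P, map_sum, ← sum_sub_distrib]
    refine sum_congr rfl fun k _ => ?_
    rw [map_mul, aeval_C, aeval_X_pow, algebraMap_int_eq, eq_intCast]
    push_cast [d]
    ring

/-- Garsia's separation lemma: If `λ ∈ (1/2, 1)` is the reciprocal of a Garsia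
number, then there is a constant `K > 0`, depending only on `λ`, such that for every `n` and
every pair of distinct words `(i₁,…,i_n), (i'₁,…,i'_n) ∈ {1,2}^n`
(encoded as `i, i' : Fin n → Fin 2`, letter `k` taking value `(i k : ℕ) + 1 ∈ {1, 2}`),
`|(1−λ) Σ_k i_k λ^{k−1} − (1−λ) Σ_k i'_k λ^{k−1}| > K / 2^n`. -/
theorem garsia_separation
    (l : ℝ) (hl : l ∈ Set.Ioo (1 / 2 : ℝ) 1) (hgarsia : IsGarsiaNumber l⁻¹) :
    ∃ K : ℝ, 0 < K ∧ ∀ n : ℕ, ∀ i i' : Fin n → Fin 2, i ≠ i' →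
      K / 2 ^ n <
        |(1 - l) * (∑ k : Fin n, (((i k : ℕ) + 1 : ℕ) : ℝ) * l ^ (k : ℕ)) -
         (1 - l) * (∑ k : Fin n, (((i' k : ℕ) + 1 : ℕ) : ℝ) * l ^ (k : ℕ))| := by
  have h1l : 0 < 1 - l := sub_pos.mpr hl.2
  obtain ⟨c, hc, hbound⟩ := hgarsia.exists_one_le_mul_abs_aeval_inv
  refine ⟨(1 - l) / c, div_pos h1l hc, fun n i i' hne => ?_⟩
  obtain ⟨P, hP, hcoeff, hdeg, hsub⟩ := exists_polynomial_eq_sub_of_ne hne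
  rw [← mul_sub, hsub, abs_mul, abs_of_pos h1l]
  have hpow : (2 : ℝ) ^ P.natDegree < 2 ^ n := pow_lt_pow_right₀ one_lt_two hdeg
  calc (1 - l) / c / 2 ^ n < (1 - l) / c / 2 ^ P.natDegree := by gcongr
    _ ≤ (1 - l) / c / 2 ^ P.natDegree * (c * 2 ^ P.natDegree * |aeval l P|) :=
        le_mul_of_one_le_right (by positivity) (hbound P hP hcoeff)
    _ = (1 - l) * |aeval l P| := by field_simp
end

section
/- Let α > 1 and β ∈ (0, 1) be real numbers such that log α / log β is irrational. Then for every y ∈ (0, ∞) there exist sequences (m_k) in ℤ and (n_k) in ℕ with n_k → ∞ such that α^{m_k} β^{n_k} → y as k → ∞; in particular the set { α^m β^n : m ∈ ℤ, n ∈ ℕ } is dense in (0, ∞). -/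
/-!
Taking logarithms, with `a = log α > 0` and `b = log β`, one has to approximate `log y` by
`m a + n b` with `n → ∞`. Modulo `a`, the numbers `n b` form the orbit of an irrational rotation of
the circle `ℝ / aℤ`, so every point of the circle is a limit of a subsequence of this orbit; lifting
back to `ℝ` supplies the integers `m`.
-/

open Filter Topology

theorem AddCircle.mapClusterPt_atTop_nsmul_coe_of_irrational {a p : ℝ} [Fact (0 < p)]
    (h : Irrational (a / p)) (x : AddCircle p) :
    MapClusterPt x atTop (fun n : ℕ ↦ n • (a : AddCircle p)) := by
  rw [mapClusterPt_atTop_nsmul_iff_mem_topologicalClosure_zmultiples, ← SetLike.mem_coe,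
    AddSubgroup.topologicalClosure_coe, AddSubgroup.coe_zmultiples]
  exact AddCircle.denseRange_zsmul_coe_iff.2 h x

theorem exists_seq_tendsto_intCast_mul_add_natCast_mul {a b : ℝ} (ha : 0 < a)
    (h : Irrational (b / a)) (t : ℝ) :
    ∃ m : ℕ → ℤ, ∃ n : ℕ → ℕ, Tendsto n atTop atTop ∧
      Tendsto (fun k ↦ m k * a + n k * b) atTop (𝓝 t) := by
  have : Fact (0 < a) := ⟨ha⟩
  obtain ⟨n, hn_mono, hn⟩ :=
    (AddCircle.mapClusterPt_atTop_nsmul_coe_of_irrational h (t : AddCircle a)).tendsto_subseq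
  refine ⟨fun k ↦ -round (a⁻¹ * (n k * b - t)), n, hn_mono.tendsto_atTop, ?_⟩
  -- `m k` moves `n k * b - t` to the fundamental domain, so it has the circle norm of `n k • b - t`
  rw [tendsto_iff_norm_sub_tendsto_zero] at hn ⊢
  convert hn using 2 with k
  rw [Function.comp_apply, ← AddCircle.coe_nsmul, ← AddCircle.coe_sub, AddCircle.norm_eq,
    Real.norm_eq_abs, nsmul_eq_mul]
  push_cast
  ring_nf

/-- Let `α > 1` and `β ∈ (0,1)` with `log α / log β` irrational.  Then for every
`y ∈ (0, ∞)` there exist sequences `(m_k)` in `ℤ` and `(n_k)` in `ℕ` with `n_k → ∞` and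
`α^{m_k} β^{n_k} → y`; in particular, `{ α^m β^n : m ∈ ℤ, n ∈ ℕ }` is dense in `(0, ∞)`. -/
theorem dense_alpha_beta_powers
    (α β : ℝ) (hα : 1 < α) (hβ : β ∈ Set.Ioo (0 : ℝ) 1)
    (hirr : Irrational (Real.log α / Real.log β)) :
    (∀ y : ℝ, 0 < y → ∃ m : ℕ → ℤ, ∃ n : ℕ → ℕ,
      Tendsto n atTop atTop ∧
      Tendsto (fun k => α ^ m k * β ^ n k) atTop (nhds y)) ∧
    Set.Ioi (0 : ℝ) ⊆ closure {x : ℝ | ∃ m : ℤ, ∃ n : ℕ, x = α ^ m * β ^ n} := by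
  have hirr' : Irrational (Real.log β / Real.log α) := by simpa only [inv_div] using hirr.inv
  have hseq (y : ℝ) (hy : 0 < y) : ∃ m : ℕ → ℤ, ∃ n : ℕ → ℕ, Tendsto n atTop atTop ∧
      Tendsto (fun k => α ^ m k * β ^ n k) atTop (nhds y) := by
    obtain ⟨m, n, hn, hlim⟩ :=
      exists_seq_tendsto_intCast_mul_add_natCast_mul (Real.log_pos hα) hirr' (Real.log y)
    refine ⟨m, n, hn, ?_⟩
    convert (Real.continuous_exp.tendsto _).comp hlim using 2 with k
    · rw [Function.comp_apply, Real.exp_add, ← Real.log_zpow, ← Real.log_pow,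
        Real.exp_log (zpow_pos (by linarith) _), Real.exp_log (pow_pos hβ.1 _)]
    · exact (Real.exp_log hy).symm
  refine ⟨hseq, fun y hy ↦ ?_⟩
  obtain ⟨m, n, -, hlim⟩ := hseq y hy
  exact mem_closure_of_tendsto hlim (.of_forall fun k ↦ ⟨m k, n k, rfl⟩)
end

section
/- Let α > 1 and β ∈ (0, 1) be real numbers such that log α / log β is irrational. Then the set E = { (2 − α^m β^n − β^n) / (2 + α^m β^n − β^n) : m ∈ ℤ, n ∈ ℕ } is dense in (−1, 1). -/
/-!
Write the element as `F (t, β ^ n)` with `t = m log α + n log β` and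
`F (t, u) = (2 - exp t - u) / (2 + exp t - u)`. Since `F (t, 0) = (2 - exp t) / (2 + exp t)`
takes every value in `(-1, 1)` and `F` is continuous, it suffices that the points
`(m log α + n log β, β ^ n)` accumulate at `(t, 0)` for every `t`, i.e. that `ℤ log α + ℕ log β`
stays dense in `ℝ` after discarding all `n < N`. Irrationality makes the group
`ℤ log α + ℤ log β` dense, so up to sign it has arbitrarily small nonzero elements with `n ≥ 0`;
an additive submonoid of `ℝ` with such elements and with elements of both signs is dense.
-/

open Set Real

theorem exists_add_nsmul_mem_Ioc {s x e : ℝ} (he : 0 < e) (hs : s ≤ x) :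
    ∃ t : ℕ, s + t • e ∈ Ioc x (x + e) := by
  obtain ⟨m, hm, -⟩ := existsUnique_add_zsmul_mem_Ioc he s x
  have hm₀ : 0 ≤ m := by
    have : 0 < (m : ℝ) * e := by linarith [hm.1, zsmul_eq_mul e m]
    exact_mod_cast ((pos_iff_pos_of_mul_pos this).mpr he).le
  lift m to ℕ using hm₀
  exact ⟨m, by simpa using hm⟩

theorem AddSubmonoid.dense_of_not_isolated_zero (S : AddSubmonoid ℝ) (hpos : ∃ c ∈ S, 0 < c)
    (hneg : ∃ c ∈ S, c < 0) (hS : ∀ ε > 0, ∃ g ∈ S, g ≠ 0 ∧ |g| < ε) :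
    Dense (S : Set ℝ) := by
  refine dense_of_exists_between fun x y hxy => ?_
  obtain ⟨g, hgS, hg₀, hgε⟩ := hS (y - x) (sub_pos.2 hxy)
  rcases hg₀.lt_or_gt with hg | hg
  · -- walk down from a point `k • c ≥ y` in steps of `g`
    obtain ⟨c, hcS, hc⟩ := hpos
    obtain ⟨k, hk⟩ := exists_lt_nsmul hc y
    obtain ⟨t, ht⟩ :=
      exists_add_nsmul_mem_Ioc (s := -(k • c)) (x := -y) (neg_pos.2 hg) (by linarith)
    rw [abs_of_neg hg] at hgε
    simp only [smul_neg, mem_Ioc] at ht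
    exact ⟨k • c + t • g, add_mem (nsmul_mem hcS k) (nsmul_mem hgS t), by linarith [ht.2],
      by linarith [ht.1]⟩
  · -- walk up from a point `k • c ≤ x` in steps of `g`
    obtain ⟨c, hcS, hc⟩ := hneg
    obtain ⟨k, hk⟩ := exists_lt_nsmul (neg_pos.2 hc) (-x)
    rw [smul_neg] at hk
    obtain ⟨t, ht⟩ := exists_add_nsmul_mem_Ioc (s := k • c) (x := x) hg (by linarith)
    rw [abs_of_pos hg] at hgε
    exact ⟨k • c + t • g, add_mem (nsmul_mem hcS k) (nsmul_mem hgS t), ht.1, by linarith [ht.2]⟩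

def zmultiplesAddMultiples {M : Type*} [AddCommGroup M] (a b : M) : AddSubmonoid M where
  carrier := {x | ∃ m : ℤ, ∃ n : ℕ, m • a + n • b = x}
  add_mem' := by
    rintro _ _ ⟨m, n, rfl⟩ ⟨m', n', rfl⟩
    exact ⟨m + m', n + n', by rw [add_smul, add_smul]; abel⟩
  zero_mem' := ⟨0, 0, by simp⟩

theorem zsmul_mem_zmultiplesAddMultiples {M : Type*} [AddCommGroup M] (a b : M) (m : ℤ) :
    m • a ∈ zmultiplesAddMultiples a b :=
  ⟨m, 0, by simp⟩

theorem dense_zmultiplesAddMultiples {a b : ℝ} (h : Irrational (a / b)) :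
    Dense (zmultiplesAddMultiples a b : Set ℝ) := by
  have ha : a ≠ 0 := (div_ne_zero_iff.1 h.ne_zero).1
  have hpm : a ∈ zmultiplesAddMultiples a b ∧ -a ∈ zmultiplesAddMultiples a b := by
    simpa using And.intro (zsmul_mem_zmultiplesAddMultiples a b 1)
      (zsmul_mem_zmultiplesAddMultiples a b (-1))
  refine AddSubmonoid.dense_of_not_isolated_zero _ ?_ ?_ fun ε hε => ?_
  · rcases ha.lt_or_gt with ha | ha
    exacts [⟨-a, hpm.2, neg_pos.2 ha⟩, ⟨a, hpm.1, ha⟩]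
  · rcases ha.lt_or_gt with ha | ha
    exacts [⟨a, hpm.1, ha⟩, ⟨-a, hpm.2, neg_neg_iff_pos.2 ha⟩]
  obtain ⟨g, hg, hg₀, hgε⟩ := (dense_addSubgroupClosure_pair_iff.2 h).exists_between hε
  obtain ⟨m, n, rfl⟩ := AddSubgroup.mem_closure_pair.1 hg
  -- one of `±(m • a + n • b)` has a nonnegative coefficient of `b`
  obtain ⟨k, rfl | rfl⟩ := Int.eq_nat_or_neg n
  · exact ⟨_, ⟨m, k, by simp⟩, hg₀.ne', by rwa [abs_of_pos hg₀]⟩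
  · refine ⟨-(m • a + -(k : ℤ) • b), ⟨-m, k, by simp [neg_smul]; abel⟩, neg_ne_zero.2 hg₀.ne', ?_⟩
    rwa [abs_neg, abs_of_pos hg₀]

theorem mem_closure_setOf_intCast_mul_add_natCast_mul_pow {a b ρ : ℝ} (h : Irrational (a / b))
    (hρ₀ : 0 ≤ ρ) (hρ₁ : ρ < 1) (r : ℝ) :
    (r, 0) ∈ closure {p : ℝ × ℝ | ∃ m : ℤ, ∃ n : ℕ, p = (m * a + n * b, ρ ^ n)} := by
  refine Metric.mem_closure_iff.2 fun δ hδ => ?_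
  obtain ⟨N, hN⟩ := exists_pow_lt_of_lt_one hδ hρ₁
  obtain ⟨_, hx, m, n, rfl⟩ :=
    Metric.dense_iff.1 (dense_zmultiplesAddMultiples h) (r - N * b) δ hδ
  have hfirst : (m * a + (n + N : ℕ) * b : ℝ) - r = m • a + n • b - (r - N * b) := by
    push_cast [zsmul_eq_mul, nsmul_eq_mul]
    ring
  have hsecond : ρ ^ (n + N) < δ :=
    (pow_le_pow_of_le_one hρ₀ hρ₁.le (N.le_add_left n)).trans_lt hN
  refine ⟨_, ⟨m, n + N, rfl⟩, ?_⟩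
  rw [Metric.mem_ball, Real.dist_eq, ← hfirst] at hx
  rw [Prod.dist_eq, max_lt_iff, Real.dist_eq, Real.dist_eq, abs_sub_comm, zero_sub, abs_neg,
    abs_of_nonneg (pow_nonneg hρ₀ _)]
  exact ⟨hx, hsecond⟩

/-- Let `α > 1` and `β ∈ (0,1)` with `log α / log β` irrational.  Then the set
`E = { (2 − α^m β^n − β^n) / (2 + α^m β^n − β^n) : m ∈ ℤ, n ∈ ℕ }` is dense in `(−1, 1)`. -/
theorem dense_orbital_set
    (α β : ℝ) (hα : 1 < α) (hβ : β ∈ Set.Ioo (0 : ℝ) 1)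
    (hirr : Irrational (Real.log α / Real.log β)) :
    Set.Ioo (-1 : ℝ) 1 ⊆ closure
      {x : ℝ | ∃ m : ℤ, ∃ n : ℕ,
        x = (2 - α ^ m * β ^ n - β ^ n) / (2 + α ^ m * β ^ n - β ^ n)} := by
  rintro y ⟨hy₁, hy₂⟩
  obtain ⟨hβ₀, hβ₁⟩ := hβ
  set v := 2 * (1 - y) / (1 + y)
  have hv : 0 < v := div_pos (by linarith) (by linarith)
  set F : ℝ × ℝ → ℝ := fun p => (2 - exp p.1 - p.2) / (2 + exp p.1 - p.2)
  have hFv : F (log v, 0) = y := by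
    have : 1 + y ≠ 0 := by linarith
    simp only [F, exp_log hv, v]
    field_simp
    ring
  have hF : ContinuousAt F (log v, 0) := by
    refine ContinuousAt.div (by fun_prop) (by fun_prop) ?_
    simp only [exp_log hv]
    linarith
  refine closure_mono ?_ (hFv ▸ mem_closure_image hF
    (mem_closure_setOf_intCast_mul_add_natCast_mul_pow hirr hβ₀.le hβ₁ (log v)))
  rintro _ ⟨_, ⟨m, n, rfl⟩, rfl⟩
  refine ⟨m, n, ?_⟩
  simp only [F, exp_add, ← log_zpow, ← log_pow, exp_log (zpow_pos (by linarith : 0 < α) m),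
    exp_log (pow_pos hβ₀ n)]
end
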